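/- Let R be a Noetherian local ring, f_1, f_2, f ∈ m, J = (f_1, f_2), I = (f_1, f_2, f). Fix d ≥ 2 and assume (0 : f_1) ∩ I^{d-2} = 0 and (0 : f_1) ∩ I^{d-1} = 0. Then there is an exact sequence of R-modules: 0 → ((f_1·I^{d-1} : f_2) ∩ I^{d-1}) / (f·[(f_1·I^{d-2} : f_2) ∩ I^{d-2}] + f_1·I^{d-2}) → E(I)_d → (J·I^{d-1} : f^d)/(J·I^{d-2} : f^{d-1}) → 0. -/

import Mathlib

open Ideal Submodule

variable {R : Type*} [CommRing R]

/-- The linear map `(a₁,…,aₘ) ↦ Σ aⱼ zⱼ`. -/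
noncomputable def sumMul {m : ℕ} (z : Fin m → R) : (Fin m → R) →ₗ[R] R :=
  ∑ j, (LinearMap.proj j : (Fin m → R) →ₗ[R] R).smulRight (z j)

/-- The degree-`d` cycles of the Koszul complex of the degree-one elements
`z₁t,…,zₘt` on the Rees algebra of `I`. -/
noncomputable def kosZ1 {m : ℕ} (I : Ideal R) (z : Fin m → R) (d : ℕ) :
    Submodule R (Fin m → R) :=
  (⨅ j : Fin m, Submodule.comap (LinearMap.proj j) ((I ^ (d - 1) : Ideal R) : Submodule R R))
    ⊓ LinearMap.ker (sumMul z)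

/-- The degree-`d` boundaries of the Koszul complex of `z₁t,…,zₘt` on the Rees algebra
of `I`. -/
noncomputable def kosB1 {m : ℕ} (I : Ideal R) (z : Fin m → R) (d : ℕ) :
    Submodule R (Fin m → R) :=
  Submodule.span R {v | ∃ j l : Fin m, ∃ u ∈ I ^ (d - 2),
    v = Pi.single l (z j * u) - Pi.single j (z l * u)}

/-- The degree-`d` component of the first Koszul homology `H₁(z₁t,…,zₘt; R(I))`;
for the full sequence of generators of `I` this computes the `d`-th module of effective
relations `E(I)_d`. -/
noncomputable abbrev kosH1 {m : ℕ} (I : Ideal R) (z : Fin m → R) (d : ℕ) :=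
  ↥(kosZ1 I z d) ⧸ (Submodule.comap (kosZ1 I z d).subtype (kosB1 I z d))

/-- The quotient `A/B` of an ideal `A` by another ideal `B` (as `R`-modules). -/
noncomputable abbrev idealQuot {R : Type*} [CommRing R] (A B : Ideal R) :=
  ↥A ⧸ (Submodule.comap (Submodule.subtype (A : Submodule R R)) (B : Submodule R R))

/-!
`E(I)_d` is the degree-`d` Koszul homology `Z/B`, where the cycles `Z` are the triples
`(a, b, c)` in `I^{d-1}` with `a f₁ + b f₂ + c f = 0` and `B` is the image of the Koszul
differential on triples in `I^{d-2}`. Taking the last coordinate maps `Z` onto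
`C = (J I^{d-1} : f) ∩ I^{d-1}` and `B` onto `J I^{d-2}`. Its kernel, the cycles `(a, b, 0)`, is
identified with `(f₁ I^{d-1} : f₂) ∩ I^{d-1}` through `b`, since `f₁` is regular on `I^{d-1}`;
under this identification `B` becomes `f·[(f₁ I^{d-2} : f₂) ∩ I^{d-2}] + f₁ I^{d-2}`. Dividing
the short exact sequence `0 → ker → Z → C → 0` by `B` gives the sequence, once
`C / J I^{d-2}` is identified with `(J I^{d-1} : f^d) / (J I^{d-2} : f^{d-1})` by multiplication
with `f^{d-1}`, which is onto because `I^{d-1} ⊆ J I^{d-2} + (f^{d-1})`.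
-/

section ExactQuotient

variable {S M N P Q : Type*} [Ring S] [AddCommGroup M] [AddCommGroup N] [AddCommGroup P]
  [AddCommGroup Q] [Module S M] [Module S N] [Module S P] [Module S Q]

theorem Function.Exact.exists_shortExact_mapQ {f : M →ₗ[S] N} {g : N →ₗ[S] P}
    (hfg : Function.Exact f g) (hg : Function.Surjective g) {p : Submodule S M}
    {q : Submodule S N} {r : Submodule S P} (hp : q.comap f = p) (hr : q.map g = r)
    (e : (P ⧸ r) ≃ₗ[S] Q) :
    ∃ (α : (M ⧸ p) →ₗ[S] N ⧸ q) (β : (N ⧸ q) →ₗ[S] Q),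
      Function.Injective α ∧ Function.Surjective β ∧
        LinearMap.range α = LinearMap.ker β := by
  subst hp hr
  refine ⟨(q.comap f).mapQ q f le_rfl, e.toLinearMap ∘ₗ q.mapQ (q.map g) g (le_comap_map g q),
    ?_, ?_, ?_⟩
  · rw [← LinearMap.ker_eq_bot, ker_mapQ, mkQ_map_self]
  · refine e.surjective.comp ?_
    rw [← LinearMap.range_eq_top, range_mapQ, LinearMap.range_eq_top.2 hg, Submodule.map_top,
      range_mkQ]
  · rw [LinearEquiv.ker_comp, eq_comm, ← LinearMap.exact_iff]
    exact (hfg.exact_mapQ_iff _ _).2 inf_le_right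

end ExactQuotient

/-- `colonInf a b K` is the paper's `(a K : b) ∩ K`. -/
def colonInf (a b K : Ideal R) : Ideal R :=
  (a * K).colon b ⊓ K

@[simp]
theorem mem_colonInf_span_singleton {a K : Ideal R} {x y : R} :
    x ∈ colonInf a (span {y}) K ↔ x * y ∈ a * K ∧ x ∈ K := by
  rw [colonInf, Ideal.mem_inf, Ideal.mem_colon_span_singleton]

theorem mem_span_pair_mul {x y r : R} {K : Ideal R} :
    r ∈ span {x, y} * K ↔ ∃ a ∈ K, ∃ b ∈ K, x * a + y * b = r := by
  simp only [Ideal.span_insert, Ideal.sup_mul, Submodule.mem_sup, Ideal.mem_span_singleton_mul]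
  constructor
  · rintro ⟨_, ⟨a, ha, rfl⟩, _, ⟨b, hb, rfl⟩, rfl⟩
    exact ⟨a, ha, b, hb, rfl⟩
  · rintro ⟨a, ha, b, hb, rfl⟩
    exact ⟨_, ⟨a, ha, rfl⟩, _, ⟨b, hb, rfl⟩, rfl⟩

theorem span_triple_eq_sup (x y z : R) : span {x, y, z} = span {x, y} ⊔ span {z} := by
  simp only [Ideal.span_insert, sup_assoc]

theorem eq_zero_of_mul_eq_zero_of_colon_inf_eq_bot {x : R} {K : Ideal R}
    (h : (⊥ : Ideal R).colon (span {x}) ⊓ K = ⊥) {a : R} (ha : a ∈ K) (hax : a * x = 0) :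
    a = 0 := by
  have : a ∈ (⊥ : Ideal R).colon (span {x}) ⊓ K :=
    ⟨Ideal.mem_colon_span_singleton.2 (by rw [hax]; exact zero_mem _), ha⟩
  rwa [h, Ideal.mem_bot] at this

theorem pow_succ_le_mul_pow_sup {I J : Ideal R} {f : R} (hI : I = J ⊔ span {f}) (n : ℕ) :
    I ^ (n + 1) ≤ J * I ^ n ⊔ span {f ^ (n + 1)} := by
  induction n with
  | zero => simp [hI]
  | succ n ih =>
    have hJI : J ≤ I := hI ▸ le_sup_left
    have hfI : span {f} ≤ I := hI ▸ le_sup_right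
    calc I ^ (n + 2) = I ^ (n + 1) * (J ⊔ span {f}) := by rw [pow_succ, ← hI]
      _ ≤ (J * I ^ n ⊔ span {f ^ (n + 1)}) * (J ⊔ span {f}) := mul_mono_left ih
      _ ≤ J * I ^ (n + 1) ⊔ span {f ^ (n + 2)} := by
        rw [Ideal.sup_mul, Ideal.mul_sup, Ideal.mul_sup, span_singleton_mul_span_singleton,
          ← pow_succ]
        refine sup_le (sup_le ?_ ?_) (sup_le ?_ le_sup_right) <;> refine le_sup_of_le_left ?_
        · rw [mul_assoc, pow_succ]
          exact mul_mono_right (mul_mono_right hJI)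
        · rw [mul_assoc, pow_succ]
          exact mul_mono_right (mul_mono_right hfI)
        · rw [mul_comm, ← span_singleton_pow]
          exact mul_mono_right (pow_right_mono hfI _)

section MulPow

variable {J I : Ideal R} {f : R} {d : ℕ}

theorem mul_pow_pred_mem_colonInf (hfI : f ∈ I) (hd : d ≠ 0) {r : R}
    (hr : r ∈ (J * I ^ (d - 1)).colon (span {f ^ d})) :
    r * f ^ (d - 1) ∈ colonInf J (span {f}) (I ^ (d - 1)) := by
  refine mem_colonInf_span_singleton.2 ⟨?_, Ideal.mul_mem_left _ _ (pow_mem_pow hfI _)⟩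
  rw [mul_assoc, ← pow_succ, Nat.sub_add_cancel (Nat.one_le_iff_ne_zero.2 hd)]
  exact Ideal.mem_colon_span_singleton.1 hr

variable (J I f d) in
noncomputable def mulPowColon (hfI : f ∈ I) (hd : d ≠ 0) :
    (J * I ^ (d - 1)).colon (span {f ^ d}) →ₗ[R]
      idealQuot (colonInf J (span {f}) (I ^ (d - 1))) (J * I ^ (d - 2)) :=
  mkQ _ ∘ₗ LinearMap.codRestrict _ (LinearMap.mulRight R (f ^ (d - 1)) ∘ₗ Submodule.subtype _)
    fun r => mul_pow_pred_mem_colonInf hfI hd r.2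

theorem ker_mulPowColon (hfI : f ∈ I) (hd : d ≠ 0) :
    LinearMap.ker (mulPowColon J I f d hfI hd) =
      Submodule.comap (Submodule.subtype _) ((J * I ^ (d - 2)).colon (span {f ^ (d - 1)})) := by
  ext r
  simp only [mulPowColon, LinearMap.mem_ker, LinearMap.coe_comp, Function.comp_apply, mkQ_apply,
    Submodule.Quotient.mk_eq_zero, Submodule.mem_comap, subtype_apply,
    Ideal.mem_colon_span_singleton]
  rfl

theorem mulPowColon_surjective (hI : I = J ⊔ span {f}) (hd : 2 ≤ d) {hfI : f ∈ I}
    {hd₀ : d ≠ 0} : Function.Surjective (mulPowColon J I f d hfI hd₀) := by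
  have hpow : d - 2 + 1 = d - 1 := by omega
  intro w
  obtain ⟨⟨c, hc⟩, rfl⟩ := Submodule.Quotient.mk_surjective _ w
  obtain ⟨hcf, hcI⟩ := mem_colonInf_span_singleton.1 hc
  have hdec : I ^ (d - 1) ≤ J * I ^ (d - 2) ⊔ span {f ^ (d - 1)} := by
    simpa only [hpow] using pow_succ_le_mul_pow_sup hI (d - 2)
  obtain ⟨j, hj, _, ht, hjt⟩ := Submodule.mem_sup.1 (hdec hcI)
  obtain ⟨s, rfl⟩ := Ideal.mem_span_singleton'.1 ht
  have hjf : j * f ∈ J * I ^ (d - 1) := by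
    simpa only [mul_assoc, ← pow_succ, hpow] using Ideal.mul_mem_mul hj hfI
  have hs : s ∈ (J * I ^ (d - 1)).colon (span {f ^ d}) := by
    refine Ideal.mem_colon_span_singleton.2 ?_
    have hfd : f ^ d = f ^ (d - 1) * f := by rw [← pow_succ, Nat.sub_add_cancel (by omega)]
    rw [show s * f ^ d = c * f - j * f by rw [hfd, ← hjt]; ring]
    exact sub_mem hcf hjf
  refine ⟨⟨s, hs⟩, (Submodule.Quotient.eq _).2 ?_⟩
  show s * f ^ (d - 1) - c ∈ J * I ^ (d - 2)
  rw [← hjt, sub_add_cancel_right]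
  exact neg_mem hj

end MulPow

theorem sumMul_apply {m : ℕ} (z v : Fin m → R) : sumMul z v = ∑ j, v j * z j := by
  simp [sumMul, LinearMap.sum_apply]

theorem kosB1_le_kosZ1 {m : ℕ} {I : Ideal R} {z : Fin m → R} (hz : ∀ j, z j ∈ I) (d : ℕ) :
    kosB1 I z d ≤ kosZ1 I z d := by
  rw [kosB1, Submodule.span_le]
  rintro _ ⟨j, l, u, hu, rfl⟩
  have hzu : ∀ k, z k * u ∈ I ^ (d - 1) := fun k =>
    Ideal.pow_le_pow_right (by omega) (pow_succ' I (d - 2) ▸ Ideal.mul_mem_mul (hz k) hu)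
  refine ⟨Submodule.mem_iInf _ |>.2 fun k => ?_, ?_⟩
  · have hsingle : ∀ l x, x ∈ I ^ (d - 1) → (Pi.single l x : Fin m → R) k ∈ I ^ (d - 1) :=
      fun l x hx => by rcases eq_or_ne k l with rfl | h <;> simp [*]
    exact sub_mem (hsingle _ _ (hzu j)) (hsingle _ _ (hzu l))
  · simp only [SetLike.mem_coe, LinearMap.mem_ker, sumMul_apply, Pi.sub_apply, sub_mul,
      Finset.sum_sub_distrib, Pi.single_apply, ite_mul, zero_mul, Finset.sum_ite_eq',
      Finset.mem_univ, if_true]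
    ring

variable {f1 f2 f : R} {I : Ideal R} {d : ℕ}

theorem mem_kosZ1_three {v : Fin 3 → R} :
    v ∈ kosZ1 I ![f1, f2, f] d ↔
      (∀ j, v j ∈ I ^ (d - 1)) ∧ v 0 * f1 + v 1 * f2 + v 2 * f = 0 := by
  simp [kosZ1, Submodule.mem_iInf, sumMul_apply, Fin.sum_univ_three, add_assoc]

variable (f1 f2 f) in
/-- The Koszul differential `K₂ → K₁` of `(f₁, f₂, f)` in the basis `e₁∧e₂, e₁∧e₃, e₂∧e₃`. -/
noncomputable def koszulBoundary : (Fin 3 → R) →ₗ[R] Fin 3 → R :=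
  Matrix.mulVecLin !![-f2, -f, 0; f1, 0, -f; 0, f1, f2]

@[simp]
theorem koszulBoundary_apply (p : Fin 3 → R) :
    koszulBoundary f1 f2 f p =
      ![-(f2 * p 0) - f * p 1, f1 * p 0 - f * p 2, f1 * p 1 + f2 * p 2] := by
  ext i
  fin_cases i <;> simp [koszulBoundary, Matrix.mulVec, dotProduct, Fin.sum_univ_three] <;> ring

theorem kosB1_eq_map :
    kosB1 I ![f1, f2, f] d =
      (Submodule.pi Set.univ fun _ => I ^ (d - 2)).map (koszulBoundary f1 f2 f) := by
  apply le_antisymm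
  · rw [kosB1, Submodule.span_le]
    rintro _ ⟨j, l, u, hu, rfl⟩
    obtain ⟨k, c, hkc⟩ : ∃ k c,
        Pi.single l (![f1, f2, f] j * u) - Pi.single j (![f1, f2, f] l * u) =
          koszulBoundary f1 f2 f (Pi.single k (c * u)) := by
      -- the generator indexed by `(j, l)` is `±∂(u eⱼ∧eₗ)`, and `0` when `j = l`
      fin_cases j <;> fin_cases l
      exacts [⟨0, 0, by ext i; fin_cases i <;> simp⟩, ⟨0, 1, by ext i; fin_cases i <;> simp⟩,
        ⟨1, 1, by ext i; fin_cases i <;> simp⟩, ⟨0, -1, by ext i; fin_cases i <;> simp⟩,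
        ⟨0, 0, by ext i; fin_cases i <;> simp⟩, ⟨2, 1, by ext i; fin_cases i <;> simp⟩,
        ⟨1, -1, by ext i; fin_cases i <;> simp⟩, ⟨2, -1, by ext i; fin_cases i <;> simp⟩,
        ⟨0, 0, by ext i; fin_cases i <;> simp⟩]
    rw [hkc]
    refine Submodule.mem_map_of_mem fun i _ => ?_
    rcases eq_or_ne i k with rfl | h
    · simpa using Ideal.mul_mem_left _ c hu
    · simp [h]
  · rintro _ ⟨p, hp, rfl⟩
    have hgen : ∀ j l, ∀ u ∈ I ^ (d - 2),
        Pi.single l (![f1, f2, f] j * u) - Pi.single j (![f1, f2, f] l * u)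
          ∈ kosB1 I ![f1, f2, f] d :=
      fun j l u hu => Submodule.subset_span ⟨j, l, u, hu, rfl⟩
    have hsplit : koszulBoundary f1 f2 f p =
        (Pi.single 1 (f1 * p 0) - Pi.single 0 (f2 * p 0))
          + (Pi.single 2 (f1 * p 1) - Pi.single 0 (f * p 1))
          + (Pi.single 2 (f2 * p 2) - Pi.single 1 (f * p 2)) := by
      ext i; fin_cases i <;> simp <;> ring
    rw [hsplit]
    exact add_mem (add_mem (hgen 0 1 _ (hp 0 trivial)) (hgen 0 2 _ (hp 1 trivial)))
      (hgen 1 2 _ (hp 2 trivial))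

theorem apply_two_mem_colonInf {z : Fin 3 → R} (hz : z ∈ kosZ1 I ![f1, f2, f] d) :
    z 2 ∈ colonInf (span {f1, f2}) (span {f}) (I ^ (d - 1)) := by
  obtain ⟨hzI, hrel⟩ := mem_kosZ1_three.1 hz
  exact mem_colonInf_span_singleton.2 ⟨mem_span_pair_mul.2 ⟨-z 0, neg_mem (hzI 0), -z 1,
    neg_mem (hzI 1), by linear_combination -hrel⟩, hzI 2⟩

theorem apply_one_mem_colonInf {z : Fin 3 → R} (hz : z ∈ kosZ1 I ![f1, f2, f] d)
    (h2 : z 2 = 0) : z 1 ∈ colonInf (span {f1}) (span {f2}) (I ^ (d - 1)) := by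
  obtain ⟨hzI, hrel⟩ := mem_kosZ1_three.1 hz
  exact mem_colonInf_span_singleton.2 ⟨Ideal.mem_span_singleton_mul.2 ⟨-z 0, neg_mem (hzI 0),
    by linear_combination -hrel + f * h2⟩, hzI 1⟩

theorem eq_zero_of_mem_kosZ1 (hf1 : (⊥ : Ideal R).colon (span {f1}) ⊓ I ^ (d - 1) = ⊥)
    {z : Fin 3 → R} (hz : z ∈ kosZ1 I ![f1, f2, f] d) (h1 : z 1 = 0) (h2 : z 2 = 0) :
    z = 0 := by
  obtain ⟨hzI, hrel⟩ := mem_kosZ1_three.1 hz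
  have h0 : z 0 = 0 :=
    eq_zero_of_mul_eq_zero_of_colon_inf_eq_bot hf1 (hzI 0) (by simpa [h1, h2] using hrel)
  ext i
  fin_cases i <;> simp [h0, h1, h2]

theorem mem_kosB1_iff_of_apply_two_eq_zero (hI : ∀ j, ![f1, f2, f] j ∈ I)
    (hf1 : (⊥ : Ideal R).colon (span {f1}) ⊓ I ^ (d - 1) = ⊥) {z : Fin 3 → R}
    (hz : z ∈ kosZ1 I ![f1, f2, f] d) (h2 : z 2 = 0) :
    z ∈ kosB1 I ![f1, f2, f] d ↔
      z 1 ∈ span {f} * colonInf (span {f1}) (span {f2}) (I ^ (d - 2)) +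
        span {f1} * I ^ (d - 2) := by
  constructor
  · rw [kosB1_eq_map]
    rintro ⟨p, hp, rfl⟩
    simp only [koszulBoundary_apply, Matrix.cons_val] at h2 ⊢
    rw [show f1 * p 0 - f * p 2 = f * -p 2 + f1 * p 0 by ring]
    refine Submodule.add_mem_sup (Ideal.mul_mem_mul (Ideal.mem_span_singleton_self f) ?_)
      (Ideal.mul_mem_mul (Ideal.mem_span_singleton_self f1) (hp 0 trivial))
    exact mem_colonInf_span_singleton.2 ⟨Ideal.mem_span_singleton_mul.2
      ⟨p 1, hp 1 trivial, by linear_combination h2⟩, neg_mem (hp 2 trivial)⟩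
  · intro hb
    obtain ⟨_, hx, _, hy, hxy⟩ := Submodule.mem_sup.1 hb
    obtain ⟨c, hc, rfl⟩ := Ideal.mem_span_singleton_mul.1 hx
    obtain ⟨u, hu, rfl⟩ := Ideal.mem_span_singleton_mul.1 hy
    obtain ⟨hcf, hcI⟩ := mem_colonInf_span_singleton.1 hc
    obtain ⟨e, he, hce⟩ := Ideal.mem_span_singleton_mul.1 hcf
    have hw : koszulBoundary f1 f2 f ![u, e, -c] ∈ kosB1 I ![f1, f2, f] d := by
      rw [kosB1_eq_map]
      refine mem_map_of_mem fun j _ => ?_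
      fin_cases j <;> simp [hu, he, hcI]
    have hzw : z = koszulBoundary f1 f2 f ![u, e, -c] := by
      rw [← sub_eq_zero]
      refine eq_zero_of_mem_kosZ1 hf1 (sub_mem hz (kosB1_le_kosZ1 hI d hw)) ?_ ?_
      · simp only [Pi.sub_apply, koszulBoundary_apply, Matrix.cons_val]
        linear_combination -hxy
      · simp only [Pi.sub_apply, koszulBoundary_apply, Matrix.cons_val]
        linear_combination h2 - hce
    rwa [hzw]

variable (f1 f2 f I d) in
noncomputable def lastCoord :
    kosZ1 I ![f1, f2, f] d →ₗ[R] colonInf (span {f1, f2}) (span {f}) (I ^ (d - 1)) :=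
  LinearMap.codRestrict _ (LinearMap.proj 2 ∘ₗ (kosZ1 I ![f1, f2, f] d).subtype)
    fun z => apply_two_mem_colonInf z.2

@[simp]
theorem coe_lastCoord (z : kosZ1 I ![f1, f2, f] d) :
    (lastCoord f1 f2 f I d z : R) = (z : Fin 3 → R) 2 :=
  rfl

theorem mem_ker_lastCoord {z : kosZ1 I ![f1, f2, f] d} :
    z ∈ LinearMap.ker (lastCoord f1 f2 f I d) ↔ (z : Fin 3 → R) 2 = 0 := by
  rw [LinearMap.mem_ker, ← Subtype.coe_inj, coe_lastCoord, ZeroMemClass.coe_zero]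

theorem lastCoord_surjective : Function.Surjective (lastCoord f1 f2 f I d) := by
  rintro ⟨c, hc⟩
  obtain ⟨hcf, hcI⟩ := mem_colonInf_span_singleton.1 hc
  obtain ⟨a, ha, b, hb, hab⟩ := mem_span_pair_mul.1 hcf
  refine ⟨⟨![-a, -b, c], mem_kosZ1_three.2 ⟨fun j => ?_, ?_⟩⟩, rfl⟩
  · fin_cases j <;> simp [ha, hb, hcI]
  · simp only [Matrix.cons_val]
    linear_combination -hab

theorem map_lastCoord_kosB1 (hI : ∀ j, ![f1, f2, f] j ∈ I) :
    (comap (kosZ1 I ![f1, f2, f] d).subtype (kosB1 I ![f1, f2, f] d)).map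
        (lastCoord f1 f2 f I d) =
      comap (colonInf (span {f1, f2}) (span {f}) (I ^ (d - 1))).subtype
        (span {f1, f2} * I ^ (d - 2)) := by
  ext c
  constructor
  · rintro ⟨z, hz, rfl⟩
    have hz' : (z : Fin 3 → R) ∈ kosB1 I ![f1, f2, f] d := hz
    rw [kosB1_eq_map] at hz'
    obtain ⟨p, hp, hpz⟩ := hz'
    rw [Submodule.mem_comap, subtype_apply, coe_lastCoord, ← hpz, koszulBoundary_apply]
    exact mem_span_pair_mul.2 ⟨p 1, hp 1 trivial, p 2, hp 2 trivial, rfl⟩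
  · intro hc
    obtain ⟨a, ha, b, hb, hab⟩ := mem_span_pair_mul.1 hc
    have hv : koszulBoundary f1 f2 f ![0, a, b] ∈ kosB1 I ![f1, f2, f] d := by
      rw [kosB1_eq_map]
      refine mem_map_of_mem fun j _ => ?_
      fin_cases j <;> simp [ha, hb]
    refine ⟨⟨_, kosB1_le_kosZ1 hI d hv⟩, hv, Subtype.ext ?_⟩
    simpa using hab

variable (f1 f2 f I d) in
noncomputable def kerLastCoordToColonInf :
    LinearMap.ker (lastCoord f1 f2 f I d) →ₗ[R] colonInf (span {f1}) (span {f2}) (I ^ (d - 1)) :=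
  LinearMap.codRestrict _
    (LinearMap.proj 1 ∘ₗ (kosZ1 I ![f1, f2, f] d).subtype ∘ₗ (LinearMap.ker _).subtype)
    fun z => apply_one_mem_colonInf z.1.2 (mem_ker_lastCoord.1 z.2)

theorem kerLastCoordToColonInf_bijective
    (hf1 : (⊥ : Ideal R).colon (span {f1}) ⊓ I ^ (d - 1) = ⊥) :
    Function.Bijective (kerLastCoordToColonInf f1 f2 f I d) := by
  refine ⟨(injective_iff_map_eq_zero _).2 fun z hz => ?_, ?_⟩
  · have h1 : (z : Fin 3 → R) 1 = 0 := congrArg Subtype.val hz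
    exact Subtype.ext (Subtype.ext (eq_zero_of_mem_kosZ1 hf1 z.1.2 h1 (mem_ker_lastCoord.1 z.2)))
  · rintro ⟨b, hb⟩
    obtain ⟨hbf, hbI⟩ := mem_colonInf_span_singleton.1 hb
    obtain ⟨a, ha, hab⟩ := Ideal.mem_span_singleton_mul.1 hbf
    refine ⟨⟨⟨![-a, b, 0], mem_kosZ1_three.2 ⟨fun j => ?_, ?_⟩⟩, mem_ker_lastCoord.2 rfl⟩, rfl⟩
    · fin_cases j <;> simp [ha, hbI]
    · simp only [Matrix.cons_val]
      linear_combination -hab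

variable (f2 f) in
noncomputable def colonInfToKosZ1 (hf1 : (⊥ : Ideal R).colon (span {f1}) ⊓ I ^ (d - 1) = ⊥) :
    colonInf (span {f1}) (span {f2}) (I ^ (d - 1)) →ₗ[R] kosZ1 I ![f1, f2, f] d :=
  (LinearMap.ker (lastCoord f1 f2 f I d)).subtype ∘ₗ
    (LinearEquiv.ofBijective _ (kerLastCoordToColonInf_bijective hf1)).symm.toLinearMap

theorem exact_colonInfToKosZ1_lastCoord
    (hf1 : (⊥ : Ideal R).colon (span {f1}) ⊓ I ^ (d - 1) = ⊥) :
    Function.Exact (colonInfToKosZ1 f2 f hf1) (lastCoord f1 f2 f I d) := by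
  rw [LinearMap.exact_iff, colonInfToKosZ1, LinearMap.range_comp, LinearEquiv.range,
    Submodule.map_top, Submodule.range_subtype]

theorem comap_colonInfToKosZ1_kosB1 (hI : ∀ j, ![f1, f2, f] j ∈ I)
    (hf1 : (⊥ : Ideal R).colon (span {f1}) ⊓ I ^ (d - 1) = ⊥) :
    (comap (kosZ1 I ![f1, f2, f] d).subtype (kosB1 I ![f1, f2, f] d)).comap
        (colonInfToKosZ1 f2 f hf1) =
      comap (colonInf (span {f1}) (span {f2}) (I ^ (d - 1))).subtype
        (span {f} * colonInf (span {f1}) (span {f2}) (I ^ (d - 2)) +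
          span {f1} * I ^ (d - 2)) := by
  ext b
  let e := LinearEquiv.ofBijective _ (kerLastCoordToColonInf_bijective (f2 := f2) (f := f) hf1)
  have h1 : (((e.symm b : LinearMap.ker _) : kosZ1 I ![f1, f2, f] d) : Fin 3 → R) 1 = b :=
    congrArg Subtype.val (e.apply_symm_apply b)
  simp only [Submodule.mem_comap, subtype_apply]
  rw [← h1]
  exact mem_kosB1_iff_of_apply_two_eq_zero hI hf1 (e.symm b).1.2
    (mem_ker_lastCoord.1 (e.symm b).2)

theorem stmt8_general {R : Type*} [CommRing R]
    (f1 f2 f : R)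
    (J I : Ideal R) (hJ : J = Ideal.span {f1, f2}) (hI : I = Ideal.span {f1, f2, f})
    (d : ℕ) (hd : 2 ≤ d)
    (hann2 : Submodule.colon (⊥ : Ideal R) (Ideal.span {f1}) ⊓ I ^ (d - 1) = ⊥) :
    ∃ (α : idealQuot
            (Submodule.colon (Ideal.span {f1} * I ^ (d - 1)) (Ideal.span {f2}) ⊓ I ^ (d - 1))
            (Ideal.span {f} *
                (Submodule.colon (Ideal.span {f1} * I ^ (d - 2)) (Ideal.span {f2})
                  ⊓ I ^ (d - 2)) +
              Ideal.span {f1} * I ^ (d - 2)) →ₗ[R] kosH1 I ![f1, f2, f] d)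
      (β : kosH1 I ![f1, f2, f] d →ₗ[R]
          idealQuot (Submodule.colon (J * I ^ (d - 1)) (Ideal.span {f ^ d}))
            (Submodule.colon (J * I ^ (d - 2)) (Ideal.span {f ^ (d - 1)}))),
      Function.Injective α ∧ Function.Surjective β ∧
        LinearMap.range α = LinearMap.ker β := by
  subst hJ hI
  have hmem : ∀ j, ![f1, f2, f] j ∈ span {f1, f2, f} := fun j =>
    Ideal.subset_span (by fin_cases j <;> simp)
  have hsurj := mulPowColon_surjective (hfI := hmem 2) (hd₀ := by omega)
    (span_triple_eq_sup f1 f2 f) hd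
  exact (exact_colonInfToKosZ1_lastCoord hann2).exists_shortExact_mapQ lastCoord_surjective
    (comap_colonInfToKosZ1_kosB1 hmem hann2) (map_lastCoord_kosB1 hmem)
    ((LinearMap.quotKerEquivOfSurjective _ hsurj).symm.trans
      (quotEquivOfEq _ _ (ker_mulPowColon _ _)))

theorem stmt8 {R : Type*} [CommRing R] [IsNoetherianRing R] [IsLocalRing R]
    (f1 f2 f : R) (h1 : f1 ∈ IsLocalRing.maximalIdeal R)
    (h2 : f2 ∈ IsLocalRing.maximalIdeal R) (hfm : f ∈ IsLocalRing.maximalIdeal R)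
    (J I : Ideal R) (hJ : J = Ideal.span {f1, f2}) (hI : I = Ideal.span {f1, f2, f})
    (d : ℕ) (hd : 2 ≤ d)
    (hann1 : Submodule.colon (⊥ : Ideal R) (Ideal.span {f1}) ⊓ I ^ (d - 2) = ⊥)
    (hann2 : Submodule.colon (⊥ : Ideal R) (Ideal.span {f1}) ⊓ I ^ (d - 1) = ⊥) :
    ∃ (α : idealQuot
            (Submodule.colon (Ideal.span {f1} * I ^ (d - 1)) (Ideal.span {f2}) ⊓ I ^ (d - 1))
            (Ideal.span {f} *
                (Submodule.colon (Ideal.span {f1} * I ^ (d - 2)) (Ideal.span {f2})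
                  ⊓ I ^ (d - 2)) +
              Ideal.span {f1} * I ^ (d - 2)) →ₗ[R] kosH1 I ![f1, f2, f] d)
      (β : kosH1 I ![f1, f2, f] d →ₗ[R]
          idealQuot (Submodule.colon (J * I ^ (d - 1)) (Ideal.span {f ^ d}))
            (Submodule.colon (J * I ^ (d - 2)) (Ideal.span {f ^ (d - 1)}))),
      Function.Injective α ∧ Function.Surjective β ∧
        LinearMap.range α = LinearMap.ker β :=
  stmt8_general f1 f2 f J I hJ hI d hd hann2
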